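/- arXiv:1806.01035 — 4 statements merged into one kernel-verified Lean document; each statement's English description precedes it below -/
import Mathlib

section
/- (Theorem 1) Let M ≥ 1 and K ≥ 1 be integers, let ρ > 0, and let s < 1 be real. Let X_(1) be the minimum of K i.i.d. Gamma(M,1) random variables. Then E[(1+ρX_(1))^{s−1}] = 1 + (s−1) Σ_{(k_1,…,k_M)} φ · Γ(1+ϑ) · ρ^{−ϑ} · Ψ(ϑ+1; ϑ+s; K/ρ), where the sum is over all M-tuples of nonnegative integers with k_1 + ⋯ + k_M = K, φ = (K!/(k_1!⋯k_M!)) / ∏_{n=0}^{M−1} (n!)^{k_{n+1}}, ϑ = Σ_{ℓ=0}^{M−1} ℓ·k_{ℓ+1}, and Ψ is Tricomi's confluent hypergeometric function of the second kind, given for a > 0, z > 0 by its integral representation Ψ(a;b;z) = (1/Γ(a)) ∫_0^∞ e^{−zt} t^{a−1} (1+t)^{b−a−1} dt. -/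
/-!
Write `Y = min_k X_k`. Since `y ↦ (1 + ρ y)^(s-1)` decreases from `1` to `0` on `[0, ∞)`, the
tail formula gives `E[(1 + ρY)^(s-1)] = 1 + ∫_0^∞ P(Y > t) (s-1) ρ (1 + ρt)^(s-2) dt`.
By independence `P(Y > t)` is the `K`-th power of the Gamma(M,1) tail `e^{-t} Σ_{n<M} t^n/n!`,
and the multinomial theorem expands this power as `e^{-Kt} Σ_k φ_k t^{ϑ_k}`. The substitution
`t ↦ t/ρ` turns each `ρ ∫_0^∞ e^{-Kt} t^ϑ (1 + ρt)^(s-2) dt` into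
`Γ(1+ϑ) ρ^{-ϑ} Ψ(ϑ+1; ϑ+s; K/ρ)`.
-/

open MeasureTheory ProbabilityTheory Real

/-- Tricomi's confluent hypergeometric function of the second kind, via its integral
representation `Ψ(a;b;z) = (1/Γ(a)) ∫_0^∞ e^(-zt) t^(a-1) (1+t)^(b-a-1) dt` (valid for
`a > 0`, `z > 0`). -/
noncomputable def tricomiU (a b z : ℝ) : ℝ :=
  (1 / Real.Gamma a) * ∫ t in Set.Ioi (0 : ℝ),
    Real.exp (-(z * t)) * t ^ (a - 1) * (1 + t) ^ (b - a - 1)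

open Set Filter Topology
open scoped Nat

section TailFormula

variable {Ω : Type*} [MeasurableSpace Ω] {μ : Measure Ω} [IsFiniteMeasure μ] {Y : Ω → ℝ}

theorem integrable_intervalIntegral_and_integral_eq_integral_measureReal_lt_mul
    (hY : AEMeasurable Y μ) (hY0 : 0 ≤ᵐ[μ] Y) {g : ℝ → ℝ} (hg : IntegrableOn g (Ioi 0))
    (hg0 : ∀ t ∈ Ioi 0, 0 ≤ g t) :
    Integrable (fun ω => ∫ t in 0..Y ω, g t) μ ∧
      ∫ ω, (∫ t in 0..Y ω, g t) ∂μ = ∫ t in Ioi 0, μ.real {ω | t < Y ω} * g t := by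
  have hg_Ioc : ∀ x ≥ 0, IntervalIntegrable g volume 0 x := fun x hx =>
    (intervalIntegrable_iff_integrableOn_Ioc_of_le hx).2 (hg.mono_set Ioc_subset_Ioi_self)
  have hG0 : ∀ x ≥ 0, 0 ≤ ∫ t in 0..x, g t := fun x hx => by
    rw [intervalIntegral.integral_of_le hx]
    exact setIntegral_nonneg measurableSet_Ioc fun t ht => hg0 t ht.1
  have hG_mono : Monotone fun x => ∫ t in 0..max x 0, g t := fun a b hab =>
    intervalIntegral.integral_mono_interval le_rfl (le_max_right a 0) (max_le_max_right 0 hab)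
      ((ae_restrict_iff' measurableSet_Ioc).2 (ae_of_all _ fun t ht => hg0 t ht.1))
      (hg_Ioc _ (le_max_right b 0))
  have hGY : AEStronglyMeasurable (fun ω => ∫ t in 0..Y ω, g t) μ := by
    refine (hG_mono.measurable.comp_aemeasurable hY).aestronglyMeasurable.congr ?_
    filter_upwards [hY0] with ω (hω : 0 ≤ Y ω)
    simp [max_eq_left hω]
  have htail : IntegrableOn (fun t => μ.real {ω | t < Y ω} * g t) (Ioi 0) := by
    refine hg.bdd_mul (c := μ.real univ) ?_ (ae_of_all _ fun t => ?_)
    · exact (Antitone.measurable fun a b hab => measureReal_mono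
        fun ω (hω : b < Y ω) => hab.trans_lt hω).aestronglyMeasurable
    · rw [Real.norm_eq_abs, abs_of_nonneg measureReal_nonneg]
      exact measureReal_mono (subset_univ _)
  have htail_nonneg : 0 ≤ᵐ[volume.restrict (Ioi 0)] fun t => μ.real {ω | t < Y ω} * g t :=
    (ae_restrict_iff' measurableSet_Ioi).2 (ae_of_all _ fun t ht =>
      mul_nonneg measureReal_nonneg (hg0 t ht))
  have hGY_nonneg : 0 ≤ᵐ[μ] fun ω => ∫ t in 0..Y ω, g t := hY0.mono fun ω hω => hG0 _ hω
  have hlayer : ∫⁻ ω, ENNReal.ofReal (∫ t in 0..Y ω, g t) ∂μ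
      = ENNReal.ofReal (∫ t in Ioi 0, μ.real {ω | t < Y ω} * g t) := by
    rw [lintegral_comp_eq_lintegral_meas_lt_mul μ hY0 hY (fun x hx => hg_Ioc x hx.le)
        ((ae_restrict_iff' measurableSet_Ioi).2 (ae_of_all _ hg0)),
      ofReal_integral_eq_lintegral_ofReal htail htail_nonneg]
    refine setLIntegral_congr_fun measurableSet_Ioi fun t _ => ?_
    rw [ENNReal.ofReal_mul measureReal_nonneg, ofReal_measureReal]
  refine ⟨⟨hGY, (hasFiniteIntegral_iff_ofReal hGY_nonneg).2 (hlayer ▸ ENNReal.ofReal_lt_top)⟩, ?_⟩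
  rw [integral_eq_lintegral_of_nonneg_ae hGY_nonneg hGY, hlayer,
    ENNReal.toReal_ofReal (integral_nonneg_of_ae htail_nonneg)]

theorem integral_comp_eq_add_integral_measureReal_lt_mul_deriv (hY : AEMeasurable Y μ)
    (hY0 : 0 ≤ᵐ[μ] Y) {f f' : ℝ → ℝ} {l : ℝ} (hf : ContinuousOn f (Ici 0))
    (hf' : ∀ t ∈ Ioi 0, HasDerivAt f (f' t) t) (hf'_nonpos : ∀ t ∈ Ioi 0, f' t ≤ 0)
    (hlim : Tendsto f atTop (𝓝 l)) :
    ∫ ω, f (Y ω) ∂μ = μ.real univ * f 0 + ∫ t in Ioi 0, μ.real {ω | t < Y ω} * f' t := by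
  have hint : IntegrableOn f' (Ioi 0) :=
    integrableOn_Ioi_deriv_of_nonpos (hf 0 self_mem_Ici) hf' hf'_nonpos hlim
  obtain ⟨hF_int, hF⟩ := integrable_intervalIntegral_and_integral_eq_integral_measureReal_lt_mul
    (g := fun t => -f' t) hY hY0 hint.neg fun t ht => neg_nonneg.2 (hf'_nonpos t ht)
  have hftc : ∀ᵐ ω ∂μ, f (Y ω) = f 0 - ∫ t in 0..Y ω, -f' t := by
    filter_upwards [hY0] with ω (hω : 0 ≤ Y ω)
    rw [intervalIntegral.integral_neg, intervalIntegral.integral_eq_sub_of_hasDerivAt_of_le hω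
      (hf.mono Icc_subset_Ici_self) (fun t ht => hf' t ht.1)
      ((intervalIntegrable_iff_integrableOn_Ioc_of_le hω).2 (hint.mono_set Ioc_subset_Ioi_self))]
    ring
  rw [integral_congr_ae hftc, integral_sub (integrable_const _) hF_int, hF, integral_const,
    smul_eq_mul, sub_eq_add_neg, ← integral_neg]
  simp only [mul_neg, neg_neg]

end TailFormula

noncomputable def erlangTail (M : ℕ) (u : ℝ) : ℝ := exp (-u) * ∑ n ∈ Finset.range M, u ^ n / n !

lemma erlangTail_nonneg (M : ℕ) {u : ℝ} (hu : 0 ≤ u) : 0 ≤ erlangTail M u := by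
  unfold erlangTail; positivity

lemma hasDerivAt_erlangTail (m : ℕ) (u : ℝ) :
    HasDerivAt (erlangTail (m + 1)) (-(u ^ m * exp (-u) / m !)) u := by
  have hsum : HasDerivAt (fun x : ℝ => ∑ n ∈ Finset.range (m + 1), x ^ n / n !)
      (∑ n ∈ Finset.range m, u ^ n / n !) u := by
    refine (HasDerivAt.fun_sum fun n _ => (hasDerivAt_pow n u).div_const (n ! : ℝ)).congr_deriv ?_
    rw [Finset.sum_range_succ']
    simp only [Nat.cast_zero, zero_mul, zero_div, add_zero]
    refine Finset.sum_congr rfl fun n _ => ?_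
    rw [Nat.factorial_succ, Nat.cast_mul, Nat.add_sub_cancel]
    field_simp
  refine (((hasDerivAt_neg u).exp).mul hsum).congr_deriv ?_
  rw [Finset.sum_range_succ]
  ring

lemma tendsto_erlangTail_atTop (M : ℕ) : Tendsto (erlangTail M) atTop (𝓝 0) := by
  have h := tendsto_finsetSum (Finset.range M) fun n _ =>
    (tendsto_pow_mul_exp_neg_atTop_nhds_zero n).div_const (n ! : ℝ)
  simp only [zero_div, Finset.sum_const_zero] at h
  refine h.congr fun u => ?_
  rw [erlangTail, Finset.mul_sum]
  exact Finset.sum_congr rfl fun n _ => by ring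

lemma gammaMeasure_Ioi_eq_erlangTail (m : ℕ) {u : ℝ} (hu : 0 ≤ u) :
    gammaMeasure ((m + 1 : ℕ) : ℝ) 1 (Ioi u) = ENNReal.ofReal (erlangTail (m + 1) u) := by
  have hpdf : ∀ t ∈ Ioi u, gammaPDF ((m + 1 : ℕ) : ℝ) 1 t
      = ENNReal.ofReal (t ^ m * exp (-t) / m !) := fun t ht => by
    rw [gammaPDF_of_nonneg (hu.trans ht.out.le), Real.one_rpow]
    push_cast
    rw [Real.Gamma_nat_eq_factorial, add_sub_cancel_right, Real.rpow_natCast]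
    ring_nf
  have hderiv : ∀ t ∈ Ici u, HasDerivAt (fun x => -erlangTail (m + 1) x)
      (t ^ m * exp (-t) / m !) t := fun t _ =>
    (hasDerivAt_erlangTail m t).neg.congr_deriv (neg_neg _)
  have hnonneg : ∀ t ∈ Ioi u, 0 ≤ t ^ m * exp (-t) / m ! := fun t ht => by
    have : 0 ≤ t := hu.trans ht.out.le
    positivity
  have hlim := (tendsto_erlangTail_atTop (m + 1)).neg
  rw [neg_zero] at hlim
  have hint := integrableOn_Ioi_deriv_of_nonneg' hderiv hnonneg hlim
  have hftc : ∫ t in Ioi u, t ^ m * exp (-t) / m ! = erlangTail (m + 1) u := by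
    rw [integral_Ioi_of_hasDerivAt_of_nonneg' hderiv hnonneg hlim, zero_sub, neg_neg]
  rw [gammaMeasure, withDensity_apply _ measurableSet_Ioi,
    setLIntegral_congr_fun measurableSet_Ioi hpdf, ← hftc,
    ofReal_integral_eq_lintegral_ofReal hint
      ((ae_restrict_iff' measurableSet_Ioi).2 (ae_of_all _ hnonneg))]

lemma ae_nonneg_gammaMeasure (a r : ℝ) : ∀ᵐ x ∂gammaMeasure a r, 0 ≤ x := by
  rw [ae_iff]
  simp only [not_le]
  exact (withDensity_apply _ measurableSet_Iio).trans (lintegral_gammaPDF_of_nonpos le_rfl)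

lemma ProbabilityTheory.iIndepFun.measure_lt_iInf_eq_prod {Ω ι : Type*} [MeasurableSpace Ω]
    {μ : Measure Ω} [Fintype ι] [Nonempty ι] {X : ι → Ω → ℝ} (hX : iIndepFun X μ) (u : ℝ) :
    μ {ω | u < ⨅ i, X i ω} = ∏ i, μ (X i ⁻¹' Ioi u) := by
  have hset : {ω | u < ⨅ i, X i ω} = ⋂ i, X i ⁻¹' Ioi u := by
    ext ω
    simp only [mem_ofPred_eq, mem_iInter, mem_preimage, mem_Ioi]
    refine ⟨fun h i => h.trans_le (ciInf_le (finite_range _).bddBelow i), fun h => ?_⟩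
    obtain ⟨i, hi⟩ := exists_eq_ciInf_of_finite (f := fun i => X i ω)
    exact hi ▸ h i
  rw [hset, hX.meas_iInter fun i => ⟨Ioi u, measurableSet_Ioi, rfl⟩]

lemma measureReal_lt_iInf_eq_erlangTail_pow {Ω ι : Type*} [MeasurableSpace Ω] {μ : Measure Ω}
    [Fintype ι] [Nonempty ι] {X : ι → Ω → ℝ} (hX : ∀ i, AEMeasurable (X i) μ)
    (hindep : iIndepFun X μ) {m : ℕ} (hdist : ∀ i, μ.map (X i) = gammaMeasure ((m + 1 : ℕ) : ℝ) 1)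
    {t : ℝ} (ht : 0 ≤ t) :
    μ.real {ω | t < ⨅ i, X i ω} = erlangTail (m + 1) t ^ Fintype.card ι := by
  have htail_one : ∀ i, μ (X i ⁻¹' Ioi t) = ENNReal.ofReal (erlangTail (m + 1) t) := fun i => by
    rw [← Measure.map_apply_of_aemeasurable (hX i) measurableSet_Ioi, hdist i,
      gammaMeasure_Ioi_eq_erlangTail m ht]
  rw [measureReal_def, hindep.measure_lt_iInf_eq_prod, Finset.prod_congr rfl fun i _ => htail_one i,
    Finset.prod_const, Finset.card_univ, ← ENNReal.ofReal_pow (erlangTail_nonneg _ ht),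
    ENNReal.toReal_ofReal (pow_nonneg (erlangTail_nonneg _ ht) _)]

-- The paper's `φ` and `ϑ` of `(k_1, …, k_M)`, stored as `k : Fin M → ℕ` with `k i = k_{i+1}`.
noncomputable def multinomialWeight {M : ℕ} (k : Fin M → ℕ) : ℝ :=
  (Nat.multinomial Finset.univ k : ℝ) / ∏ i : Fin M, ((i : ℕ)! : ℝ) ^ k i

def weightedDegree {M : ℕ} (k : Fin M → ℕ) : ℕ := ∑ i : Fin M, (i : ℕ) * k i

lemma erlangTail_pow (M K : ℕ) (u : ℝ) :
    erlangTail M u ^ K = exp (-(K * u)) *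
      ∑ k ∈ Finset.Nat.antidiagonalTuple M K, multinomialWeight k * u ^ weightedDegree k := by
  rw [erlangTail, mul_pow, ← Real.exp_nat_mul, mul_neg,
    ← Fin.sum_univ_eq_sum_range (fun n => u ^ n / (n ! : ℝ)) M,
    Finset.sum_pow_eq_sum_piAntidiag, Finset.piAntidiag_univ_fin_eq_antidiagonalTuple]
  congr 1
  refine Finset.sum_congr rfl fun k _ => ?_
  simp_rw [div_pow, ← pow_mul, Finset.prod_div_distrib, Finset.prod_pow_eq_pow_sum]
  rw [multinomialWeight, weightedDegree]
  ring

section MellinIntegrand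

variable {ρ s : ℝ}

lemma hasDerivAt_one_add_mul_rpow {t : ℝ} (ht : 1 + ρ * t ≠ 0) :
    HasDerivAt (fun y => (1 + ρ * y) ^ (s - 1)) ((s - 1) * ρ * (1 + ρ * t) ^ (s - 2)) t := by
  have h := ((hasDerivAt_id t).const_mul ρ).const_add 1 |>.rpow_const (p := s - 1) (Or.inl ht)
  refine h.congr_deriv ?_
  rw [show s - 1 - 1 = s - 2 by ring, id, mul_one, mul_comm ρ]

lemma tendsto_one_add_mul_rpow_atTop (hρ : 0 < ρ) (hs : s < 1) :
    Tendsto (fun y => (1 + ρ * y) ^ (s - 1)) atTop (𝓝 0) := by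
  have h := (tendsto_rpow_neg_atTop (y := 1 - s) (by linarith)).comp
    (tendsto_atTop_add_const_left _ 1 (tendsto_id.const_mul_atTop hρ))
  simpa [Function.comp_def] using h

theorem integral_one_add_mul_rpow_eq {Ω : Type*} [MeasurableSpace Ω] {μ : Measure Ω}
    [IsProbabilityMeasure μ] {Y : Ω → ℝ} (hY : AEMeasurable Y μ) (hY0 : 0 ≤ᵐ[μ] Y)
    (hρ : 0 < ρ) (hs : s < 1) :
    ∫ ω, (1 + ρ * Y ω) ^ (s - 1) ∂μ
      = 1 + ∫ t in Ioi 0, μ.real {ω | t < Y ω} * ((s - 1) * ρ * (1 + ρ * t) ^ (s - 2)) := by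
  have hpos : ∀ t ∈ Ici (0 : ℝ), 1 + ρ * t ≠ 0 := fun t ht => by
    have : 0 ≤ t := ht
    positivity
  rw [integral_comp_eq_add_integral_measureReal_lt_mul_deriv hY hY0
    (fun t ht => (hasDerivAt_one_add_mul_rpow (hpos t ht)).continuousAt.continuousWithinAt)
    (fun t ht => hasDerivAt_one_add_mul_rpow (hpos t (mem_Ici_of_Ioi ht)))
    (fun t ht => ?_) (tendsto_one_add_mul_rpow_atTop hρ hs)]
  · simp
  · have : 0 < t := ht
    exact mul_nonpos_of_nonpos_of_nonneg (mul_nonpos_of_nonpos_of_nonneg (by linarith) hρ.le)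
      (by positivity)

lemma integrableOn_exp_neg_mul_mul_pow_mul_rpow {b : ℝ} (hb : 0 < b) (hρ : 0 ≤ ρ) (hs : s ≤ 2)
    (n : ℕ) :
    IntegrableOn (fun u => exp (-(b * u)) * u ^ n * (1 + ρ * u) ^ (s - 2)) (Ioi 0) := by
  have hdom : IntegrableOn (fun u => u ^ n * exp (-(b * u))) (Ioi 0) := by
    simpa using integrableOn_rpow_mul_exp_neg_mul_rpow (s := n) (p := 1)
      (neg_one_lt_zero.trans_le n.cast_nonneg) one_pos hb
  refine hdom.mono' ?_ ((ae_restrict_iff' measurableSet_Ioi).2 (ae_of_all _ fun u hu => ?_))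
  · exact Measurable.aestronglyMeasurable (by fun_prop)
  · have hu : 0 < u := hu
    have h1 : 1 ≤ 1 + ρ * u := by nlinarith
    rw [Real.norm_eq_abs, abs_of_nonneg (by positivity), mul_comm (exp _)]
    exact mul_le_of_le_one_right (by positivity)
      (Real.rpow_le_one_of_one_le_of_nonpos h1 (by linarith))

lemma gamma_div_pow_mul_tricomiU (hρ : 0 < ρ) (b : ℝ) (n : ℕ) :
    Gamma (1 + n) / ρ ^ n * tricomiU (n + 1) (n + s) (b / ρ)
      = ρ * ∫ u in Ioi 0, exp (-(b * u)) * u ^ n * (1 + ρ * u) ^ (s - 2) := by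
  have hsub : ∫ t in Ioi 0, exp (-(b / ρ * t)) * t ^ n * (1 + t) ^ (s - 2)
      = ρ ^ (n + 1) * ∫ u in Ioi 0, exp (-(b * u)) * u ^ n * (1 + ρ * u) ^ (s - 2) := by
    have h := integral_comp_mul_left_Ioi'
      (fun t => exp (-(b / ρ * t)) * t ^ n * (1 + t) ^ (s - 2)) 0 hρ
    rw [mul_zero] at h
    rw [← h, smul_eq_mul, pow_succ', mul_assoc]
    congr 1
    rw [← integral_const_mul]
    refine setIntegral_congr_fun measurableSet_Ioi fun u _ => ?_
    rw [show b / ρ * (ρ * u) = b * u by field_simp, mul_pow]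
    ring
  have hΓ : Gamma (1 + n) ≠ 0 := (Real.Gamma_pos_of_pos (by positivity)).ne'
  rw [tricomiU, show (n : ℝ) + 1 - 1 = n by ring, show (n : ℝ) + s - (n + 1) - 1 = s - 2 by ring,
    add_comm (n : ℝ) 1]
  simp only [Real.rpow_natCast]
  rw [hsub, pow_succ]
  field_simp

lemma integral_erlangTail_pow_mul_deriv (M : ℕ) {K : ℕ} (hK : 0 < K) (hρ : 0 < ρ) (hs : s ≤ 2) :
    ∫ t in Ioi 0, erlangTail M t ^ K * ((s - 1) * ρ * (1 + ρ * t) ^ (s - 2))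
      = (s - 1) * ∑ k ∈ Finset.Nat.antidiagonalTuple M K,
          multinomialWeight k * Gamma (1 + weightedDegree k) / ρ ^ weightedDegree k
            * tricomiU (weightedDegree k + 1) (weightedDegree k + s) (K / ρ) := by
  have hexpand : ∀ t, erlangTail M t ^ K * ((s - 1) * ρ * (1 + ρ * t) ^ (s - 2))
      = ∑ k ∈ Finset.Nat.antidiagonalTuple M K, (s - 1) * multinomialWeight k * ρ
          * (exp (-(K * t)) * t ^ weightedDegree k * (1 + ρ * t) ^ (s - 2)) := fun t => by
    rw [erlangTail_pow, mul_assoc, Finset.sum_mul, Finset.mul_sum]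
    exact Finset.sum_congr rfl fun k _ => by ring
  simp_rw [hexpand]
  rw [integral_finsetSum _ fun k _ => (integrableOn_exp_neg_mul_mul_pow_mul_rpow
    (by positivity) hρ.le hs _).const_mul _, Finset.mul_sum]
  refine Finset.sum_congr rfl fun k _ => ?_
  rw [integral_const_mul, mul_assoc _ ρ, ← gamma_div_pow_mul_tricomiU hρ]
  ring

end MellinIntegrand

theorem mellin_multicast_eq_tricomi_general {Ω : Type*} [MeasureSpace Ω]
    [IsProbabilityMeasure (ℙ : Measure Ω)]
    (M K : ℕ) (hM : 1 ≤ M) (hK : 1 ≤ K)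
    (ρ s : ℝ) (hρ : 0 < ρ) (hs : s < 1)
    (X : Fin K → Ω → ℝ)
    (hindep : iIndepFun X ℙ)
    (hdist : ∀ k, Measure.map (X k) ℙ = gammaMeasure M 1) :
    (∫ ω, (1 + ρ * ⨅ k, X k ω) ^ (s - 1) ∂ℙ)
      = 1 + (s - 1)
          * ∑ k ∈ Finset.Nat.antidiagonalTuple M K,
              ((Nat.multinomial Finset.univ k : ℝ)
                  / ∏ i : Fin M, ((Nat.factorial (i : ℕ) : ℝ)) ^ (k i))
                * Real.Gamma (1 + (∑ i : Fin M, (i : ℕ) * k i : ℕ))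
                / ρ ^ (∑ i : Fin M, (i : ℕ) * k i)
                * tricomiU ((∑ i : Fin M, (i : ℕ) * k i : ℕ) + 1)
                    ((∑ i : Fin M, (i : ℕ) * k i : ℕ) + s) (K / ρ) := by
  obtain ⟨m, rfl⟩ : ∃ m, M = m + 1 := ⟨M - 1, by omega⟩
  have : Nonempty (Fin K) := ⟨⟨0, hK⟩⟩
  have : IsProbabilityMeasure (gammaMeasure ((m + 1 : ℕ) : ℝ) 1) :=
    isProbabilityMeasure_gammaMeasure (by positivity) one_pos
  -- `Measure.map` sends a function that is not a.e.-measurable to `0`.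
  have hXmeas : ∀ k, AEMeasurable (X k) ℙ := fun k =>
    .of_map_ne_zero (hdist k ▸ IsProbabilityMeasure.ne_zero _)
  have hY0 : 0 ≤ᵐ[ℙ] fun ω => ⨅ k, X k ω := by
    filter_upwards [ae_all_iff.2 fun k => ae_of_ae_map (hXmeas k)
      ((hdist k).symm ▸ ae_nonneg_gammaMeasure _ _)] with ω hω
    exact le_ciInf hω
  rw [integral_one_add_mul_rpow_eq (AEMeasurable.iInf hXmeas) hY0 hρ hs,
    setIntegral_congr_fun measurableSet_Ioi fun t ht => by
      rw [measureReal_lt_iInf_eq_erlangTail_pow hXmeas hindep hdist ht.out.le, Fintype.card_fin],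
    integral_erlangTail_pow_mul_deriv _ hK hρ (by linarith)]
  rfl

/-- Theorem 1: the Mellin transform of `1 + ρ X_(1)`, where `X_(1)` is the minimum of `K`
i.i.d. `Gamma(M,1)` random variables, expressed via Tricomi's function. The sum runs over
all `M`-tuples `(k_1, …, k_M)` of nonnegative integers with `k_1 + ⋯ + k_M = K`, with
`φ = (K!/(k_1!⋯k_M!)) / ∏_{n=0}^{M-1} (n!)^(k_{n+1})` and `ϑ = Σ_{ℓ=0}^{M-1} ℓ·k_{ℓ+1}`. -/
theorem mellin_multicast_eq_tricomi {Ω : Type*} [MeasureSpace Ω]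
    [IsProbabilityMeasure (ℙ : Measure Ω)]
    (M K : ℕ) (hM : 1 ≤ M) (hK : 1 ≤ K)
    (ρ s : ℝ) (hρ : 0 < ρ) (hs : s < 1)
    (X : Fin K → Ω → ℝ)
    (hmeas : ∀ k, Measurable (X k))
    (hindep : iIndepFun X ℙ)
    (hdist : ∀ k, Measure.map (X k) ℙ = gammaMeasure M 1) :
    (∫ ω, (1 + ρ * ⨅ k, X k ω) ^ (s - 1) ∂ℙ)
      = 1 + (s - 1)
          * ∑ k ∈ Finset.Nat.antidiagonalTuple M K,
              ((Nat.multinomial Finset.univ k : ℝ)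
                  / ∏ i : Fin M, ((Nat.factorial (i : ℕ) : ℝ)) ^ (k i))
                * Real.Gamma (1 + (∑ i : Fin M, (i : ℕ) * k i : ℕ))
                / ρ ^ (∑ i : Fin M, (i : ℕ) * k i)
                * tricomiU ((∑ i : Fin M, (i : ℕ) * k i : ℕ) + 1)
                    ((∑ i : Fin M, (i : ℕ) * k i : ℕ) + s) (K / ρ) :=
  mellin_multicast_eq_tricomi_general M K hM hK ρ s hρ hs X hindep hdist
end

section
/- (Alzer's inequality, as used in Lemma 1) Let M ≥ 1 be an integer and let F_M denote the CDF of the Gamma(M,1) distribution, F_M(x) = (1/(M−1)!) ∫_0^x t^{M−1} e^{−t} dt. Then for every x > 0, (1 − e^{−bx})^M ≤ F_M(x) ≤ (1 − e^{−x})^M, where b = (M!)^{−1/M}. -/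
/-!
Write `M = n + 1`, `G_a(x) = (1 - e^{-a x})^M` and `φ(y) = log (y / (1 - e^{-y}))`.
Both `G_1 - F_M` and `F_M - G_b` vanish at `0` and at infinity, so each is nonnegative as soon as
its derivative, once nonpositive, stays nonpositive. The sign of that derivative is read off from
`log F_M'(z) - log G_a'(z) = n φ(a z) - (1 - a) z - log (M! a^M)`.
Since `φ` is increasing, this settles `a = 1`. For `a = b` the constant term vanishes, and `φ` is
concave on `[0, ∞)` with `φ 0 = 0`, so `φ(b z) / z` decreases and `n φ(b z) ≤ (1 - b) z`, once true,
stays true.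
-/

open MeasureTheory Real

/-- The CDF of the `Gamma(M,1)` distribution,
`F_M(x) = (1/(M-1)!) ∫_0^x t^(M-1) e^(-t) dt`. -/
noncomputable def gammaNatCDF (M : ℕ) (x : ℝ) : ℝ :=
  (1 / (Nat.factorial (M - 1) : ℝ)) * ∫ t in (0 : ℝ)..x, t ^ ((M : ℝ) - 1) * Real.exp (-t)

open Set Filter Topology
open scoped Nat

theorem nonneg_of_deriv_nonpos_persistent {u u' : ℝ → ℝ} {l : ℝ}
    (hcont : ContinuousOn u (Ici 0)) (h₀ : 0 ≤ u 0) (hl : 0 ≤ l)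
    (hlim : Tendsto u atTop (𝓝 l)) (hderiv : ∀ x, 0 < x → HasDerivAt u (u' x) x)
    (hpersist : ∀ s t, 0 < s → s ≤ t → u' s ≤ 0 → u' t ≤ 0) {x : ℝ} (hx : 0 ≤ x) :
    0 ≤ u x := by
  rcases hx.eq_or_lt with rfl | hx
  · exact h₀
  by_contra! hux
  obtain ⟨ξ, hξ, hslope⟩ := exists_hasDerivAt_eq_slope u u' hx
    (hcont.mono Icc_subset_Ici_self) fun y hy => hderiv y hy.1
  have hξneg : u' ξ ≤ 0 := by
    rw [hslope]
    exact div_nonpos_of_nonpos_of_nonneg (by linarith) (by linarith)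
  have hanti : AntitoneOn u (Ici ξ) :=
    antitoneOn_of_hasDerivWithinAt_nonpos (convex_Ici ξ)
      (hcont.mono (Ici_subset_Ici.2 hξ.1.le))
      (fun y hy => (hderiv y (hξ.1.trans_le (interior_subset hy))).hasDerivWithinAt)
      (fun y hy => hpersist ξ y hξ.1 (interior_subset hy) hξneg)
  have hlx : l ≤ u x := le_of_tendsto hlim <| eventually_atTop.2
    ⟨x, fun y hy => hanti (mem_Ici.2 hξ.2.le) (mem_Ici.2 (hξ.2.le.trans hy)) hy⟩
  linarith

theorem ConcaveOn.le_mul_of_le_mul {g : ℝ → ℝ} (hg : ConcaveOn ℝ (Ici 0) g) (hg₀ : g 0 = 0)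
    {c s t : ℝ} (hs : 0 < s) (hst : s ≤ t) (hgs : g s ≤ c * s) : g t ≤ c * t := by
  have ht : 0 < t := hs.trans_le hst
  have hslope := hg.antitoneOn_slope_gt (mem_Ici.2 le_rfl) ⟨mem_Ici.2 hs.le, hs⟩
    ⟨mem_Ici.2 ht.le, ht⟩ hst
  simp only [slope_def_field, hg₀, sub_zero] at hslope
  rw [← div_le_iff₀ ht]
  exact hslope.trans ((div_le_iff₀ hs).2 hgs)

theorem one_sub_exp_neg_pos {y : ℝ} (hy : 0 < y) : 0 < 1 - exp (-y) := by
  simpa using hy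

theorem sq_mul_exp_le_sq_exp_sub_one (y : ℝ) : y ^ 2 * exp y ≤ (exp y - 1) ^ 2 := by
  have hsinh : (y / 2) ^ 2 ≤ sinh (y / 2) ^ 2 := by
    rw [sq_le_sq, abs_sinh]
    exact self_le_sinh_iff.2 (abs_nonneg _)
  have hsq : exp y = exp (y / 2) ^ 2 := by rw [← exp_nat_mul]; ring_nf
  have hsub : exp y - 1 = 2 * exp (y / 2) * sinh (y / 2) := by
    have : exp (y / 2) * exp (-(y / 2)) = 1 := by rw [← exp_add]; simp
    rw [sinh_eq]
    linear_combination hsq + this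
  rw [hsub, hsq, mul_pow, mul_pow]
  nlinarith [sq_nonneg (exp (y / 2))]

theorem rpow_neg_one_div_natCast_pow {x : ℝ} (hx : 0 ≤ x) {m : ℕ} (hm : m ≠ 0) :
    (x ^ (-1 / (m : ℝ))) ^ m = x⁻¹ := by
  rw [← rpow_natCast, ← rpow_mul hx, div_mul_cancel₀ _ (Nat.cast_ne_zero.2 hm), rpow_neg_one]

-- `log 0 = 0` makes this vanish at `0`, which is also its limit from the right.
noncomputable def logDivOneSubExpNeg (y : ℝ) : ℝ := log y - log (1 - exp (-y))

theorem logDivOneSubExpNeg_zero : logDivOneSubExpNeg 0 = 0 := by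
  simp [logDivOneSubExpNeg]

theorem hasDerivAt_logDivOneSubExpNeg {y : ℝ} (hy : 0 < y) :
    HasDerivAt logDivOneSubExpNeg (y⁻¹ - (exp y - 1)⁻¹) y := by
  have hE : HasDerivAt (fun y => 1 - exp (-y)) (exp (-y)) y := by
    simpa using ((hasDerivAt_neg y).exp).const_sub 1
  refine ((hasDerivAt_log hy.ne').sub (hE.log (one_sub_exp_neg_pos hy).ne')).congr_deriv ?_
  have : exp y - 1 ≠ 0 := (sub_pos.2 (one_lt_exp_iff.2 hy)).ne'
  rw [exp_neg]
  field_simp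

theorem tendsto_logDivOneSubExpNeg_nhdsGT_zero :
    Tendsto logDivOneSubExpNeg (𝓝[>] 0) (𝓝 0) := by
  have hE : HasDerivAt (fun y => 1 - exp (-y)) 1 0 := by
    simpa using ((hasDerivAt_neg (0 : ℝ)).exp).const_sub 1
  have hslope : Tendsto (fun y => y⁻¹ * (1 - exp (-y))) (𝓝[>] 0) (𝓝 1) := by
    have := (hasDerivAt_iff_tendsto_slope_zero.1 hE).mono_left
      (nhdsWithin_mono _ fun y (hy : y ∈ Ioi 0) => ne_of_gt hy)
    simpa using this
  have hlog := ((continuousAt_log one_ne_zero).tendsto.comp hslope).neg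
  rw [log_one, neg_zero] at hlog
  refine hlog.congr' (eventually_nhdsWithin_of_forall fun y (hy : 0 < y) => ?_)
  simp only [Function.comp, logDivOneSubExpNeg]
  rw [log_mul (inv_ne_zero hy.ne') (one_sub_exp_neg_pos hy).ne', log_inv]
  ring

theorem continuousOn_logDivOneSubExpNeg : ContinuousOn logDivOneSubExpNeg (Ici 0) := by
  intro y hy
  rcases (mem_Ici.1 hy).eq_or_lt with rfl | hy
  · rw [← continuousWithinAt_Ioi_iff_Ici, ContinuousWithinAt, logDivOneSubExpNeg_zero]
    exact tendsto_logDivOneSubExpNeg_nhdsGT_zero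
  · exact (hasDerivAt_logDivOneSubExpNeg hy).continuousAt.continuousWithinAt

theorem monotoneOn_logDivOneSubExpNeg : MonotoneOn logDivOneSubExpNeg (Ioi 0) :=
  monotoneOn_of_hasDerivWithinAt_nonneg (convex_Ioi 0)
    (fun y hy => (hasDerivAt_logDivOneSubExpNeg hy).continuousAt.continuousWithinAt)
    (fun y hy => (hasDerivAt_logDivOneSubExpNeg (interior_subset hy)).hasDerivWithinAt)
    fun y hy => by
      have hy : 0 < y := interior_subset hy
      rw [sub_nonneg]
      exact inv_anti₀ hy (by linarith [add_one_le_exp y])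

theorem antitoneOn_inv_sub_inv_exp_sub_one :
    AntitoneOn (fun y : ℝ => y⁻¹ - (exp y - 1)⁻¹) (Ioi 0) := by
  have hderiv : ∀ y : ℝ, 0 < y → HasDerivAt (fun y : ℝ => y⁻¹ - (exp y - 1)⁻¹)
      (-(y ^ 2)⁻¹ - -exp y / (exp y - 1) ^ 2) y := fun y hy =>
    (hasDerivAt_inv hy.ne').sub
      (((hasDerivAt_exp y).sub_const 1).inv (sub_pos.2 (one_lt_exp_iff.2 hy)).ne')
  refine antitoneOn_of_hasDerivWithinAt_nonpos (convex_Ioi 0)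
    (fun y hy => (hderiv y hy).continuousAt.continuousWithinAt)
    (fun y hy => (hderiv y (interior_subset hy)).hasDerivWithinAt) fun y hy => ?_
  have hy : 0 < y := interior_subset hy
  have hE : 0 < exp y - 1 := sub_pos.2 (one_lt_exp_iff.2 hy)
  rw [neg_div, sub_neg_eq_add, neg_add_nonpos_iff, div_le_iff₀ (by positivity), inv_mul_eq_div,
    le_div_iff₀ (by positivity)]
  linarith [sq_mul_exp_le_sq_exp_sub_one y]

theorem concaveOn_logDivOneSubExpNeg : ConcaveOn ℝ (Ici 0) logDivOneSubExpNeg := by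
  refine AntitoneOn.concaveOn_of_deriv (convex_Ici 0) continuousOn_logDivOneSubExpNeg
    (fun y hy => ?_) fun s hs t ht hst => ?_
  · rw [interior_Ici] at hy
    exact (hasDerivAt_logDivOneSubExpNeg hy).differentiableAt.differentiableWithinAt
  · rw [interior_Ici] at hs ht
    rw [(hasDerivAt_logDivOneSubExpNeg hs).deriv, (hasDerivAt_logDivOneSubExpNeg ht).deriv]
    exact antitoneOn_inv_sub_inv_exp_sub_one hs ht hst

theorem gammaNatCDF_succ (n : ℕ) (x : ℝ) :
    gammaNatCDF (n + 1) x = (∫ t in (0 : ℝ)..x, t ^ n * exp (-t)) / n ! := by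
  simp only [gammaNatCDF, add_tsub_cancel_right, Nat.cast_add, Nat.cast_one,
    rpow_natCast, one_div_mul_eq_div]

theorem gammaNatCDF_zero (M : ℕ) : gammaNatCDF M 0 = 0 := by
  simp [gammaNatCDF]

theorem hasDerivAt_gammaNatCDF_succ (n : ℕ) (x : ℝ) :
    HasDerivAt (gammaNatCDF (n + 1)) (x ^ n * exp (-x) / n !) x := by
  have hcont : Continuous fun t : ℝ => t ^ n * exp (-t) := by fun_prop
  rw [funext (gammaNatCDF_succ n)]
  exact (intervalIntegral.integral_hasDerivAt_right (hcont.intervalIntegrable 0 x)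
    (hcont.stronglyMeasurableAtFilter _ _) hcont.continuousAt).div_const _

theorem tendsto_gammaNatCDF_succ_atTop (n : ℕ) :
    Tendsto (gammaNatCDF (n + 1)) atTop (𝓝 1) := by
  have hs : (0 : ℝ) < n + 1 := by positivity
  have hGamma : Tendsto (fun x => ∫ t in (0 : ℝ)..x, t ^ n * exp (-t)) atTop (𝓝 (n ! : ℝ)) := by
    rw [← Gamma_nat_eq_factorial, Gamma_eq_integral hs]
    refine (intervalIntegral_tendsto_integral_Ioi 0 (GammaIntegral_convergent hs)
      tendsto_id).congr fun x => intervalIntegral.integral_congr fun t _ => ?_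
    simp only [add_sub_cancel_right, rpow_natCast, mul_comm]
  rw [funext (gammaNatCDF_succ n), ← div_self (Nat.cast_ne_zero.2 n.factorial_ne_zero)]
  exact hGamma.div_const _

theorem hasDerivAt_one_sub_exp_neg_mul_pow (n : ℕ) (a x : ℝ) :
    HasDerivAt (fun y => (1 - exp (-(a * y))) ^ (n + 1))
      ((n + 1) * (1 - exp (-(a * x))) ^ n * (a * exp (-(a * x)))) x := by
  have hE : HasDerivAt (fun y => 1 - exp (-(a * y))) (a * exp (-(a * x))) x := by
    simpa [mul_comm] using (((hasDerivAt_id x).const_mul a).neg.exp).const_sub 1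
  simpa using hE.fun_pow (n + 1)

theorem tendsto_one_sub_exp_neg_mul_pow_atTop (n : ℕ) {a : ℝ} (ha : 0 < a) :
    Tendsto (fun y => (1 - exp (-(a * y))) ^ (n + 1)) atTop (𝓝 1) := by
  have hexp : Tendsto (fun y => exp (-(a * y))) atTop (𝓝 0) :=
    tendsto_exp_atBot.comp (tendsto_neg_atTop_atBot.comp (tendsto_id.const_mul_atTop ha))
  simpa using (hexp.const_sub 1).pow (n + 1)

theorem log_density_sub_log_deriv_one_sub_exp_neg_mul_pow (n : ℕ) {a z : ℝ} (ha : 0 < a)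
    (hz : 0 < z) :
    log (z ^ n * exp (-z) / n !) - log ((n + 1) * (1 - exp (-(a * z))) ^ n * (a * exp (-(a * z))))
      = n * logDivOneSubExpNeg (a * z) - (1 - a) * z - log ((n + 1)! * a ^ (n + 1)) := by
  have hE := one_sub_exp_neg_pos (mul_pos ha hz)
  have hdensity : log (z ^ n * exp (-z) / n !) = n * log z - z - log n ! := by
    rw [log_div (by positivity) (by positivity), log_mul (by positivity) (exp_ne_zero _), log_pow,
      log_exp]
    ring
  have hderiv : log ((n + 1) * (1 - exp (-(a * z))) ^ n * (a * exp (-(a * z))))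
      = log (n + 1) + n * log (1 - exp (-(a * z))) + log a - a * z := by
    rw [log_mul (by positivity) (by positivity), log_mul (by positivity) (by positivity),
      log_mul ha.ne' (exp_ne_zero _), log_pow, log_exp]
    ring
  have hconst : log ((n + 1)! * a ^ (n + 1)) = log (n + 1) + log n ! + (n + 1) * log a := by
    rw [log_mul (by positivity) (by positivity), Nat.factorial_succ, Nat.cast_mul,
      log_mul (by positivity) (by positivity), log_pow]
    push_cast
    ring
  rw [hdensity, hderiv, hconst, logDivOneSubExpNeg, log_mul ha.ne' hz.ne']
  ring

theorem deriv_one_sub_exp_neg_mul_pow_le_density_iff (n : ℕ) {a z : ℝ} (ha : 0 < a)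
    (hz : 0 < z) :
    (n + 1) * (1 - exp (-(a * z))) ^ n * (a * exp (-(a * z))) ≤ z ^ n * exp (-z) / n ! ↔
      (1 - a) * z + log ((n + 1)! * a ^ (n + 1)) ≤ n * logDivOneSubExpNeg (a * z) := by
  have hE := one_sub_exp_neg_pos (mul_pos ha hz)
  rw [← log_le_log_iff (by positivity) (by positivity), ← sub_nonneg,
    log_density_sub_log_deriv_one_sub_exp_neg_mul_pow n ha hz]
  constructor <;> intro h <;> linarith

theorem density_le_deriv_one_sub_exp_neg_mul_pow_iff (n : ℕ) {a z : ℝ} (ha : 0 < a)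
    (hz : 0 < z) :
    z ^ n * exp (-z) / n ! ≤ (n + 1) * (1 - exp (-(a * z))) ^ n * (a * exp (-(a * z))) ↔
      n * logDivOneSubExpNeg (a * z) ≤ (1 - a) * z + log ((n + 1)! * a ^ (n + 1)) := by
  have hE := one_sub_exp_neg_pos (mul_pos ha hz)
  rw [← log_le_log_iff (by positivity) (by positivity), ← sub_nonpos,
    log_density_sub_log_deriv_one_sub_exp_neg_mul_pow n ha hz]
  constructor <;> intro h <;> linarith

theorem gammaNatCDF_succ_le (n : ℕ) {x : ℝ} (hx : 0 ≤ x) :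
    gammaNatCDF (n + 1) x ≤ (1 - exp (-x)) ^ (n + 1) := by
  have hderiv (z : ℝ) := (hasDerivAt_one_sub_exp_neg_mul_pow n 1 z).sub
    (hasDerivAt_gammaNatCDF_succ n z)
  have hsign (z : ℝ) (hz : 0 < z) := sub_nonpos.trans
    (deriv_one_sub_exp_neg_mul_pow_le_density_iff n one_pos hz)
  have hlim := (tendsto_one_sub_exp_neg_mul_pow_atTop n one_pos).sub
    (tendsto_gammaNatCDF_succ_atTop n)
  rw [sub_self] at hlim
  have key := nonneg_of_deriv_nonpos_persistent
    (fun z _ => (hderiv z).continuousAt.continuousWithinAt) (by simp [gammaNatCDF_zero]) le_rfl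
    hlim (fun z _ => hderiv z) (fun s t hs hst hus => ?_) hx
  · simpa using key
  rw [hsign s hs] at hus
  rw [hsign t (hs.trans_le hst)]
  simp only [sub_self, zero_mul, zero_add, one_mul, one_pow, mul_one] at hus ⊢
  exact hus.trans (mul_le_mul_of_nonneg_left
    (monotoneOn_logDivOneSubExpNeg hs (hs.trans_le hst) hst) n.cast_nonneg)

theorem one_sub_exp_neg_mul_pow_le_gammaNatCDF_succ (n : ℕ) {b : ℝ} (hb₀ : 0 < b)
    (hb : (n + 1)! * b ^ (n + 1) = 1) {x : ℝ} (hx : 0 ≤ x) :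
    (1 - exp (-(b * x))) ^ (n + 1) ≤ gammaNatCDF (n + 1) x := by
  have hderiv (z : ℝ) := (hasDerivAt_gammaNatCDF_succ n z).sub
    (hasDerivAt_one_sub_exp_neg_mul_pow n b z)
  have hsign (z : ℝ) (hz : 0 < z) := sub_nonpos.trans
    (density_le_deriv_one_sub_exp_neg_mul_pow_iff n hb₀ hz)
  have hlim := (tendsto_gammaNatCDF_succ_atTop n).sub
    (tendsto_one_sub_exp_neg_mul_pow_atTop n hb₀)
  rw [sub_self] at hlim
  have key := nonneg_of_deriv_nonpos_persistent
    (fun z _ => (hderiv z).continuousAt.continuousWithinAt) (by simp [gammaNatCDF_zero]) le_rfl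
    hlim (fun z _ => hderiv z) (fun s t hs hst hus => ?_) hx
  · simpa using key
  have ht := hs.trans_le hst
  rw [hsign s hs, hb, log_one, add_zero] at hus
  rw [hsign t ht, hb, log_one, add_zero]
  have hscale (r : ℝ) : (1 - b) * r = (1 - b) / b * (b * r) := by field_simp
  rw [hscale] at hus ⊢
  exact (concaveOn_logDivOneSubExpNeg.smul n.cast_nonneg).le_mul_of_le_mul
    (by simp [logDivOneSubExpNeg_zero]) (mul_pos hb₀ hs)
    (mul_le_mul_of_nonneg_left hst hb₀.le) hus

/-- Alzer's inequality: for every integer `M ≥ 1` and `x > 0`,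
`(1 - e^(-b x))^M ≤ F_M(x) ≤ (1 - e^(-x))^M` where `b = (M!)^(-1/M)`. -/
theorem alzer_inequality (M : ℕ) (hM : 1 ≤ M) (x : ℝ) (hx : 0 < x) :
    (1 - Real.exp (-((Nat.factorial M : ℝ) ^ (-(1 : ℝ) / M) * x))) ^ M ≤ gammaNatCDF M x
    ∧ gammaNatCDF M x ≤ (1 - Real.exp (-x)) ^ M := by
  obtain ⟨n, rfl⟩ := Nat.exists_eq_add_of_le' hM
  have hb : ((n + 1)! : ℝ) * (((n + 1)! : ℝ) ^ (-(1 : ℝ) / (n + 1 : ℕ))) ^ (n + 1) = 1 := by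
    rw [rpow_neg_one_div_natCast_pow (by positivity) n.succ_ne_zero,
      mul_inv_cancel₀ (by positivity)]
  exact ⟨one_sub_exp_neg_mul_pow_le_gammaNatCDF_succ n (by positivity) hb hx.le,
    gammaNatCDF_succ_le n hx.le⟩
end

section
/- Let M ≥ 1 be a fixed integer, let ρ > 0, and let s < 1 be real. For K ≥ 1 set d_K = (M!/K)^{1/M} and define the asymptotic Mellin transform M_K^{as}(s) = 1 + (s−1)·ρ·∫_0^∞ (1+ρx)^{s−2} e^{−(x/d_K)^M} dx. Then lim_{K→∞} (1 − M_K^{as}(s)) / d_K = (1−s)·ρ·Γ(1 + 1/M). In particular M_K^{as}(s) → 1 and 1 − M_K^{as}(s) decays at rate Θ(K^{−1/M}) as K → ∞. -/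
/-!
Substituting `x = d_K y` gives
`(1 - M_K^as(s)) / d_K = (1 - s) ρ ∫_0^∞ (1 + ρ d_K y)^(s-2) e^(-y^M) dy`.
Since `s - 2 ≤ 0`, the integrand is dominated by `e^(-y^M)`, so as `d_K → 0` dominated
convergence sends the integral to `∫_0^∞ e^(-y^M) dy = Γ(1 + 1/M)`.
-/

open MeasureTheory Real Filter

/-- The asymptotic Mellin transform of the multicast service increment: with
`d_K = (M!/K)^(1/M)`,
`M_K^as(s) = 1 + (s-1)·ρ·∫_0^∞ (1+ρx)^(s-2) e^(-(x/d_K)^M) dx`. -/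
noncomputable def asympMellin (M : ℕ) (ρ s : ℝ) (K : ℕ) : ℝ :=
  1 + (s - 1) * ρ * ∫ x in Set.Ioi (0 : ℝ),
    (1 + ρ * x) ^ (s - 2)
      * Real.exp (-((x / ((Nat.factorial M : ℝ) / K) ^ ((1 : ℝ) / M)) ^ M))

open Set Topology

theorem tendsto_setIntegral_one_add_mul_rpow_mul {g : ℝ → ℝ} (hg : IntegrableOn g (Ioi 0))
    {a : ℝ} (ha : a ≤ 0) :
    Tendsto (fun t => ∫ y in Ioi (0 : ℝ), (1 + t * y) ^ a * g y) (𝓝[≥] 0)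
      (𝓝 (∫ y in Ioi (0 : ℝ), g y)) := by
  refine tendsto_integral_filter_of_dominated_convergence (fun y => ‖g y‖) ?_ ?_ hg.norm ?_
  · refine Eventually.of_forall fun t => AEStronglyMeasurable.mul ?_ hg.aestronglyMeasurable
    exact (by fun_prop : Measurable fun y : ℝ => (1 + t * y) ^ a).aestronglyMeasurable
  · filter_upwards [self_mem_nhdsWithin] with t (ht : 0 ≤ t)
    filter_upwards [ae_restrict_mem measurableSet_Ioi] with y (hy : 0 < y)
    have hbase : 1 ≤ 1 + t * y := le_add_of_nonneg_right (mul_nonneg ht hy.le)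
    rw [norm_mul, Real.norm_of_nonneg (rpow_nonneg (zero_le_one.trans hbase) a)]
    exact mul_le_of_le_one_left (norm_nonneg _) (rpow_le_one_of_one_le_of_nonpos hbase ha)
  · refine ae_of_all _ fun y => ?_
    have hcont : ContinuousAt (fun t : ℝ => (1 + t * y) ^ a * g y) 0 :=
      ((continuousAt_const.add (continuousAt_id.mul continuousAt_const)).rpow_const
        (Or.inl (by simp))).mul continuousAt_const
    simpa using hcont.tendsto.mono_left nhdsWithin_le_nhds

theorem tendsto_setIntegral_one_add_mul_rpow_mul_exp_neg_pow {n : ℕ} (hn : n ≠ 0) {a : ℝ}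
    (ha : a ≤ 0) :
    Tendsto (fun t => ∫ y in Ioi (0 : ℝ), (1 + t * y) ^ a * exp (-y ^ n)) (𝓝[≥] 0)
      (𝓝 (Gamma (1 + 1 / n))) := by
  have hn' : (0 : ℝ) < n := by positivity
  have hint : IntegrableOn (fun y : ℝ => exp (-y ^ n)) (Ioi 0) := by
    simpa [rpow_natCast] using integrableOn_rpow_mul_exp_neg_rpow (s := 0) (by norm_num) hn'
  have hval : ∫ y in Ioi (0 : ℝ), exp (-y ^ n) = Gamma (1 + 1 / n) := by
    simpa [rpow_natCast, add_comm] using integral_exp_neg_rpow hn'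
  simpa [hval] using tendsto_setIntegral_one_add_mul_rpow_mul hint ha

theorem setIntegral_Ioi_zero_eq_mul_setIntegral_comp_mul (f : ℝ → ℝ) {d : ℝ} (hd : 0 < d) :
    ∫ x in Ioi (0 : ℝ), f x = d * ∫ y in Ioi (0 : ℝ), f (d * y) := by
  simpa using (integral_comp_mul_left_Ioi' f 0 hd).symm

noncomputable def weibullScale (M K : ℕ) : ℝ := ((M.factorial : ℝ) / K) ^ ((1 : ℝ) / M)

theorem weibullScale_pos (M : ℕ) {K : ℕ} (hK : K ≠ 0) : 0 < weibullScale M K := by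
  unfold weibullScale; positivity

theorem tendsto_weibullScale {M : ℕ} (hM : M ≠ 0) :
    Tendsto (weibullScale M) atTop (𝓝[>] 0) := by
  refine tendsto_nhdsWithin_iff.2 ⟨?_, eventually_ne_atTop 0 |>.mono fun K => weibullScale_pos M⟩
  have hcont : ContinuousAt (fun x : ℝ => x ^ ((1 : ℝ) / M)) 0 :=
    continuousAt_rpow_const 0 _ (Or.inr (by positivity))
  have h := hcont.tendsto.comp (tendsto_const_div_atTop_nhds_zero_nat (M.factorial : ℝ))
  rwa [zero_rpow (by positivity)] at h

theorem one_sub_asympMellin_div_weibullScale (M : ℕ) (ρ s : ℝ) {K : ℕ} (hK : K ≠ 0) :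
    (1 - asympMellin M ρ s K) / weibullScale M K =
      (1 - s) * ρ * ∫ y in Ioi (0 : ℝ),
        (1 + ρ * weibullScale M K * y) ^ (s - 2) * exp (-y ^ M) := by
  have hd := weibullScale_pos M hK
  change (1 - (1 + (s - 1) * ρ * ∫ x in Ioi (0 : ℝ),
    (1 + ρ * x) ^ (s - 2) * exp (-(x / weibullScale M K) ^ M))) / weibullScale M K = _
  rw [setIntegral_Ioi_zero_eq_mul_setIntegral_comp_mul _ hd]
  simp_rw [mul_div_cancel_left₀ _ hd.ne', ← mul_assoc]
  field_simp
  ring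

/-- For fixed `M ≥ 1`, `ρ > 0` and `s < 1`, the asymptotic Mellin transform satisfies
`(1 - M_K^as(s))/d_K → (1-s)·ρ·Γ(1+1/M)` as `K → ∞`; in particular `M_K^as(s) → 1`. -/
theorem asympMellin_limit (M : ℕ) (hM : 1 ≤ M) (ρ s : ℝ) (hρ : 0 < ρ) (hs : s < 1) :
    Tendsto
      (fun K : ℕ =>
        (1 - asympMellin M ρ s K) / ((Nat.factorial M : ℝ) / K) ^ ((1 : ℝ) / M))
      atTop (nhds ((1 - s) * ρ * Real.Gamma (1 + 1 / M)))
    ∧ Tendsto (fun K : ℕ => asympMellin M ρ s K) atTop (nhds 1) := by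
  have hM0 : M ≠ 0 := by omega
  have hd := tendsto_weibullScale hM0
  have hρd : Tendsto (fun K => ρ * weibullScale M K) atTop (𝓝[≥] 0) := by
    refine tendsto_nhdsWithin_iff.2 ⟨?_, ?_⟩
    · simpa using (tendsto_nhds_of_tendsto_nhdsWithin hd).const_mul ρ
    · filter_upwards [eventually_ne_atTop 0] with K hK
      exact (mul_pos hρ (weibullScale_pos M hK)).le
  have hlim : Tendsto (fun K => (1 - asympMellin M ρ s K) / weibullScale M K) atTop
      (𝓝 ((1 - s) * ρ * Gamma (1 + 1 / M))) :=
    (((tendsto_setIntegral_one_add_mul_rpow_mul_exp_neg_pow hM0 (by linarith)).comp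
      hρd).const_mul _).congr' <| (eventually_ne_atTop 0).mono fun K hK =>
        (one_sub_asympMellin_div_weibullScale M ρ s hK).symm
  refine ⟨hlim, ?_⟩
  have h := (hlim.mul (tendsto_nhds_of_tendsto_nhdsWithin hd)).const_sub 1
  rw [mul_zero, sub_zero] at h
  refine h.congr' ((eventually_ne_atTop 0).mono fun K hK => ?_)
  rw [div_mul_cancel₀ _ (weibullScale_pos M hK).ne', sub_sub_cancel]
end

section
/- (Theorem 2, for the multicast minimum SNR) Let M ≥ 1 be a fixed integer, let ρ > 0, and let s < 1 be real. For K ≥ 1 let X_(1)^{(K)} be the minimum of K i.i.d. Gamma(M,1) random variables. Then lim_{K→∞} [ (1 + ρ·E[X_(1)^{(K)}])^{s−1} − E[(1 + ρ·X_(1)^{(K)})^{s−1}] ] = 0. -/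
/-!
The minimum of `K` i.i.d. `Gamma(M,1)` variables tends to `0` almost surely: the law charges every
interval `[0, ε)`, so by independence `P(min ≥ ε) = P(X ≥ ε)^K → 0`. The minimum is dominated by
the integrable `X₀`, so dominated convergence gives `E[min] → 0` and, since `f t = (1 + ρt)^(s-1)`
is bounded on `[0, ∞)`, `E[f(min)] → f 0`. Continuity of `f` at `0` gives `f(E[min]) → f 0` too.
-/

open MeasureTheory ProbabilityTheory Real Filter Topology

namespace ProbabilityTheory

variable {a r : ℝ}

lemma mul_gammaPDFReal (ha : 0 < a) (hr : 0 < r) (x : ℝ) :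
    x * gammaPDFReal a r x = a / r * gammaPDFReal (a + 1) r x := by
  unfold gammaPDFReal
  split_ifs with hx
  · rw [add_sub_cancel_right, Real.Gamma_add_one ha.ne', Real.rpow_add_one hr.ne',
      show x ^ a = x ^ (a - 1) * x by
        simpa using Real.rpow_add_one' hx (y := a - 1) (by simpa using ha.ne')]
    field_simp
  · simp

lemma measurable_gammaPDF (a r : ℝ) : Measurable (gammaPDF a r) :=
  (measurable_gammaPDFReal a r).ennreal_ofReal

lemma integrable_gammaPDFReal (ha : 0 < a) (hr : 0 < r) : Integrable (gammaPDFReal a r) :=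
  ⟨(stronglyMeasurable_gammaPDFReal a r).aestronglyMeasurable,
    (hasFiniteIntegral_iff_ofReal (ae_of_all _ (gammaPDFReal_nonneg ha hr))).2 <|
      (lintegral_gammaPDF_eq_one ha hr).trans_lt ENNReal.one_lt_top⟩

lemma integrable_id_gammaMeasure (ha : 0 < a) (hr : 0 < r) :
    Integrable id (gammaMeasure a r) := by
  rw [gammaMeasure, integrable_withDensity_iff (measurable_gammaPDF a r)
    (ae_of_all _ fun _ => ENNReal.ofReal_lt_top)]
  simp only [gammaPDF, ENNReal.toReal_ofReal (gammaPDFReal_nonneg ha hr _), id,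
    mul_gammaPDFReal ha hr]
  exact (integrable_gammaPDFReal (by positivity) hr).const_mul _

lemma gammaMeasure_Iio_zero : gammaMeasure a r (Set.Iio 0) = 0 := by
  rw [gammaMeasure, withDensity_apply _ measurableSet_Iio, lintegral_gammaPDF_of_nonpos le_rfl]

lemma gammaMeasure_Iio_ne_zero (ha : 0 < a) (hr : 0 < r) {ε : ℝ} (hε : 0 < ε) :
    gammaMeasure a r (Set.Iio ε) ≠ 0 := by
  rw [gammaMeasure, Ne, withDensity_apply_eq_zero (measurable_gammaPDF a r)]
  intro h
  have hsub : Set.Ioo 0 ε ⊆ {x | gammaPDF a r x ≠ 0} ∩ Set.Iio ε := fun x hx =>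
    ⟨(ENNReal.ofReal_pos.2 (gammaPDFReal_pos ha hr hx.1)).ne', hx.2⟩
  exact (hε.trans_le (by simpa using measure_mono_null hsub h)).false

end ProbabilityTheory

lemma iInf_fin_nonneg {x : ℕ → ℝ} (hx : ∀ k, 0 ≤ x k) (K : ℕ) : 0 ≤ ⨅ k : Fin K, x k :=
  Real.iInf_nonneg fun k => hx k

lemma iInf_fin_le {x : ℕ → ℝ} {K k : ℕ} (hk : k < K) : ⨅ i : Fin K, x i ≤ x k :=
  ciInf_le (Finite.bddBelow_range _) (⟨k, hk⟩ : Fin K)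

-- For `K = 0` the infimum is the junk value `0`, hence the nonnegativity assumption.
lemma iInf_fin_le_apply_zero {x : ℕ → ℝ} (hx : ∀ k, 0 ≤ x k) (K : ℕ) :
    ⨅ k : Fin K, x k ≤ x 0 := by
  rcases K.eq_zero_or_pos with rfl | hK
  · simpa using hx 0
  · exact iInf_fin_le hK

lemma tendsto_iInf_fin_zero {x : ℕ → ℝ} (hx : ∀ k, 0 ≤ x k) (hsmall : ∀ ε > 0, ∃ k, x k < ε) :
    Tendsto (fun K : ℕ => ⨅ k : Fin K, x k) atTop (𝓝 0) := by
  refine tendsto_order.2 ⟨fun b hb => .of_forall fun K => hb.trans_le (iInf_fin_nonneg hx K),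
    fun b hb => ?_⟩
  obtain ⟨k, hk⟩ := hsmall b hb
  filter_upwards [eventually_gt_atTop k] with K hK using (iInf_fin_le hK).trans_lt hk

section IndepMin

variable {Ω : Type*} [MeasurableSpace Ω] {μ : Measure Ω} {ν : Measure ℝ} {X : ℕ → Ω → ℝ}

lemma ae_forall_nonneg_of_map_eq (hX : ∀ k, Measurable (X k)) (hdist : ∀ k, μ.map (X k) = ν)
    (hν : ν (Set.Iio 0) = 0) : ∀ᵐ ω ∂μ, ∀ k, 0 ≤ X k ω := by
  refine ae_all_iff.2 fun k => ?_
  have hν' : ∀ᵐ y ∂ν, 0 ≤ y := by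
    filter_upwards [measure_eq_zero_iff_ae_notMem.1 hν] with y hy using not_lt.1 hy
  exact ae_of_ae_map (hX k).aemeasurable (hdist k ▸ hν')

lemma measure_forall_ge_eq_zero [IsProbabilityMeasure ν] (hX : ∀ k, Measurable (X k))
    (hindep : iIndepFun X μ) (hdist : ∀ k, μ.map (X k) = ν) {ε : ℝ} (hε : ν (Set.Iio ε) ≠ 0) :
    μ {ω | ∀ k, ε ≤ X k ω} = 0 := by
  have hp : ν (Set.Ici ε) < 1 := by
    rw [← Set.compl_Iio, prob_compl_eq_one_sub measurableSet_Iio]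
    exact ENNReal.sub_lt_self ENNReal.one_ne_top one_ne_zero hε
  have hK : ∀ K : ℕ, μ {ω | ∀ k, ε ≤ X k ω} ≤ ν (Set.Ici ε) ^ K := fun K =>
    calc μ {ω | ∀ k, ε ≤ X k ω} ≤ μ (⋂ k ∈ Finset.range K, X k ⁻¹' Set.Ici ε) :=
          measure_mono fun ω hω => Set.mem_biInter fun k _ => hω k
      _ = ν (Set.Ici ε) ^ K := by
          rw [hindep.meas_biInter fun k _ => ⟨Set.Ici ε, measurableSet_Ici, rfl⟩,
            Finset.prod_congr rfl fun k _ => by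
              rw [← Measure.map_apply (hX k) measurableSet_Ici, hdist k],
            Finset.prod_const, Finset.card_range]
  exact le_antisymm (ge_of_tendsto' (ENNReal.tendsto_pow_atTop_nhds_zero_of_lt_one hp) hK) zero_le

lemma ae_forall_pos_exists_lt [IsProbabilityMeasure ν] (hX : ∀ k, Measurable (X k))
    (hindep : iIndepFun X μ) (hdist : ∀ k, μ.map (X k) = ν)
    (hν : ∀ ε > 0, ν (Set.Iio ε) ≠ 0) : ∀ᵐ ω ∂μ, ∀ ε > 0, ∃ k, X k ω < ε := by
  have h : ∀ᵐ ω ∂μ, ∀ n : ℕ, ∃ k, X k ω < 1 / (n + 1) := by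
    refine ae_all_iff.2 fun n => ?_
    simpa [ae_iff] using measure_forall_ge_eq_zero hX hindep hdist (hν _ Nat.one_div_pos_of_nat)
  filter_upwards [h] with ω hω ε hε
  obtain ⟨n, hn⟩ := exists_nat_one_div_lt hε
  obtain ⟨k, hk⟩ := hω n
  exact ⟨k, hk.trans hn⟩

end IndepMin

section JensenGap

variable {Ω : Type*} [MeasurableSpace Ω] {μ : Measure Ω} [IsProbabilityMeasure μ]

lemma tendsto_sub_integral_comp_of_ae_tendsto_zero {Y : ℕ → Ω → ℝ} {g : Ω → ℝ} {f : ℝ → ℝ}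
    {C : ℝ}    (hY : ∀ K, AEMeasurable (Y K) μ) (hg : Integrable g μ)
    (hYg : ∀ K, ∀ᵐ ω ∂μ, 0 ≤ Y K ω ∧ Y K ω ≤ g ω)
    (hlim : ∀ᵐ ω ∂μ, Tendsto (fun K => Y K ω) atTop (𝓝 0))
    (hf : Measurable f) (hfC : ∀ t, 0 ≤ t → |f t| ≤ C) (hf0 : ContinuousAt f 0) :
    Tendsto (fun K => f (∫ ω, Y K ω ∂μ) - ∫ ω, f (Y K ω) ∂μ) atTop (𝓝 0) := by
  have hmean : Tendsto (fun K => ∫ ω, Y K ω ∂μ) atTop (𝓝 0) := by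
    simpa using tendsto_integral_of_dominated_convergence g (fun K => (hY K).aestronglyMeasurable)
      hg (fun K => by
        filter_upwards [hYg K] with ω h
        rw [Real.norm_eq_abs, abs_of_nonneg h.1]
        exact h.2) hlim
  have hcomp : Tendsto (fun K => ∫ ω, f (Y K ω) ∂μ) atTop (𝓝 (f 0)) := by
    have h := tendsto_integral_of_dominated_convergence (F := fun K ω => f (Y K ω))
      (fun _ => C) (fun K => (hf.comp_aemeasurable (hY K)).aestronglyMeasurable)
      (integrable_const C) (fun K => by filter_upwards [hYg K] with ω h using hfC _ h.1)
      (by filter_upwards [hlim] with ω h using hf0.tendsto.comp h)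
    simpa using h
  simpa using (hf0.tendsto.comp hmean).sub hcomp

end JensenGap

lemma abs_one_add_mul_rpow_le_one {ρ p t : ℝ} (hρ : 0 ≤ ρ) (hp : p ≤ 0) (ht : 0 ≤ t) :
    |(1 + ρ * t) ^ p| ≤ 1 := by
  have h1 : 1 ≤ 1 + ρ * t := le_add_of_nonneg_right (mul_nonneg hρ ht)
  rw [abs_of_nonneg (Real.rpow_nonneg (zero_le_one.trans h1) _)]
  exact Real.rpow_le_one_of_one_le_of_nonpos h1 hp

/-- Theorem 2 (for the multicast minimum SNR): if `X_0, X_1, …` is an i.i.d. sequence of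
`Gamma(M,1)` random variables and `X_(1)^(K)` is the minimum of the first `K` of them,
then for `ρ > 0` and `s < 1` the Jensen-type gap
`(1 + ρ E[X_(1)^(K)])^(s-1) - E[(1 + ρ X_(1)^(K))^(s-1)]` vanishes as `K → ∞`. -/
theorem jensen_gap_min_iid_gamma_tendsto_zero {Ω : Type*} [MeasureSpace Ω]
    [IsProbabilityMeasure (ℙ : Measure Ω)]
    (M : ℕ) (hM : 1 ≤ M) (ρ s : ℝ) (hρ : 0 < ρ) (hs : s < 1)
    (X : ℕ → Ω → ℝ)
    (hmeas : ∀ k, Measurable (X k))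
    (hindep : iIndepFun X ℙ)
    (hdist : ∀ k, Measure.map (X k) ℙ = gammaMeasure M 1) :
    Tendsto
      (fun K : ℕ =>
        (1 + ρ * ∫ ω, (⨅ k : Fin K, X k ω) ∂ℙ) ^ (s - 1)
          - ∫ ω, (1 + ρ * ⨅ k : Fin K, X k ω) ^ (s - 1) ∂ℙ)
      atTop (nhds 0) := by
  have hM0 : (0 : ℝ) < M := by exact_mod_cast hM
  have := isProbabilityMeasure_gammaMeasure hM0 one_pos
  have hint : Integrable (X 0) ℙ := by
    have h : Integrable id (Measure.map (X 0) ℙ) := by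
      rw [hdist 0]
      exact integrable_id_gammaMeasure hM0 one_pos
    exact h.comp_measurable (hmeas 0)
  have hnonneg := ae_forall_nonneg_of_map_eq hmeas hdist gammaMeasure_Iio_zero
  have hsmall := ae_forall_pos_exists_lt hmeas hindep hdist
    fun _ => gammaMeasure_Iio_ne_zero hM0 one_pos
  have hdom : ∀ K : ℕ, ∀ᵐ ω ∂ℙ, 0 ≤ ⨅ k : Fin K, X k ω ∧ ⨅ k : Fin K, X k ω ≤ X 0 ω :=
    fun K => by
      filter_upwards [hnonneg] with ω h using ⟨iInf_fin_nonneg h K, iInf_fin_le_apply_zero h K⟩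
  have hlim : ∀ᵐ ω ∂ℙ, Tendsto (fun K : ℕ => ⨅ k : Fin K, X k ω) atTop (𝓝 0) := by
    filter_upwards [hnonneg, hsmall] with ω h0 h
    exact tendsto_iInf_fin_zero (x := (X · ω)) h0 h
  have hf : Measurable fun t : ℝ => (1 + ρ * t) ^ (s - 1) := by fun_prop
  have hf0 : ContinuousAt (fun t : ℝ => (1 + ρ * t) ^ (s - 1)) 0 :=
    ContinuousAt.rpow_const (by fun_prop) (.inl (by simp))
  exact tendsto_sub_integral_comp_of_ae_tendsto_zero (Y := fun K ω => ⨅ k : Fin K, X k ω)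
    (fun K => (Measurable.iInf fun k : Fin K => hmeas k).aemeasurable) hint hdom hlim hf
    (fun t => abs_one_add_mul_rpow_le_one hρ.le (by linarith)) hf0
end
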